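/- Define the four mirabolic subgroups of GL₂(𝔬): B₁(𝔬) = {[[z,z'],[0,1]] : z ∈ 𝔬^×, z' ∈ 𝔬}, B₂(𝔬) = {[[1,z'],[0,z]] : z ∈ 𝔬^×, z' ∈ 𝔬}, B₃(𝔬) = {[[z,0],[z',1]] : z ∈ 𝔬^×, z' ∈ 𝔬}, B₄(𝔬) = {[[1,0],[z',z]] : z ∈ 𝔬^×, z' ∈ 𝔬}. Then for each i ∈ {1,2,3,4}: GL₂(𝔬) = 𝒪_L^× · B_i(𝔬) and 𝒪_L^× ∩ B_i(𝔬) = {1}; in particular every k ∈ GL₂(𝔬) factors uniquely as k = u·b with u ∈ 𝒪_L^× and b ∈ B_i(𝔬). -/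

import Mathlib

/-! `F` a nonarchimedean local field, modelled by a field `F` with valuation ring `o`
(a DVR) and uniformizer `ϖ ∈ o`.  We fix `𝐚₀ ∈ 𝔬^×` and `𝐚₁ ∈ 𝔬` such that
`X² − 𝐚₁X − 𝐚₀` is irreducible modulo `𝔭` (equivalently, for a quadratic polynomial,
it has no root modulo `𝔭`), and set `α = [[0,1],[𝐚₀,𝐚₁]]`.  Then `L = F[α] ⊆ M₂(F)`
is an unramified quadratic field extension of `F` with ring of integers
`𝒪_L = 𝔬[α] = 𝔬 + 𝔬α`, whose unit group is `𝒪_L^× ⊆ GL₂(𝔬)`. -/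

/-- `GL₂(𝔬)`: matrices with entries in `𝔬` whose inverse also has entries in `𝔬`. -/
def GLo {F : Type*} [Field F] (o : ValuationSubring F) :
    Set (Matrix (Fin 2) (Fin 2) F) :=
  {g | (∀ i j, g i j ∈ o) ∧
    ∃ h : Matrix (Fin 2) (Fin 2) F, (∀ i j, h i j ∈ o) ∧ g * h = 1 ∧ h * g = 1}

/-- The order `𝒪_L = 𝔬[α] = 𝔬 + 𝔬α ⊆ M₂(F)`. -/
def OL {F : Type*} [Field F] (o : ValuationSubring F) (α : Matrix (Fin 2) (Fin 2) F) :
    Set (Matrix (Fin 2) (Fin 2) F) :=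
  {m | ∃ x y : F, x ∈ o ∧ y ∈ o ∧ m = x • (1 : Matrix (Fin 2) (Fin 2) F) + y • α}

/-- The unit group `𝒪_L^×` (as a subset of `M₂(F)`). -/
def OLx {F : Type*} [Field F] (o : ValuationSubring F) (α : Matrix (Fin 2) (Fin 2) F) :
    Set (Matrix (Fin 2) (Fin 2) F) :=
  {m | m ∈ OL o α ∧ ∃ m' ∈ OL o α, m * m' = 1 ∧ m' * m = 1}


/-! Each `B_i(𝔬)` is the stabiliser in `GL₂(𝔬)` of a standard basis vector, acting on columns
(`B₂`, `B₃`) or on rows (`B₁`, `B₄`). A fixed column or row of `x + yα` determines `(x, y)` and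
can take any value in `𝔬²`. Since `X² − 𝐚₁X − 𝐚₀` has no root modulo `𝔭`, the norm
`det (x + yα) = x² + 𝐚₁xy − 𝐚₀y²` is a unit as soon as one entry of `x + yα` is. So if `u ∈ 𝒪_L`
has the relevant column of `k ∈ GL₂(𝔬)`, then `u` is a unit and `u⁻¹k` lies in the column
stabiliser; for a row stabiliser one takes instead `u⁻¹ ∈ 𝒪_L` with the relevant row of `k⁻¹`.
The factorisation is unique because both factors range over groups meeting only in `1`. -/

open Matrix

theorem factorization_of_inter_eq_one {M : Type*} [Monoid M] {G U B : Set M}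
    (hG : ∀ g ∈ G, ∀ h ∈ G, g * h ∈ G) (hUG : U ⊆ G) (hBG : B ⊆ G)
    (hU_mul : ∀ u ∈ U, ∀ v ∈ U, u * v ∈ U) (hU_inv : ∀ u ∈ U, ∃ v ∈ U, u * v = 1 ∧ v * u = 1)
    (hB_mul : ∀ b ∈ B, ∀ c ∈ B, b * c ∈ B) (hB_inv : ∀ b ∈ B, ∃ c ∈ B, b * c = 1)
    (hUB : U ∩ B = {1}) (hex : ∀ k ∈ G, ∃ u ∈ U, ∃ b ∈ B, k = u * b) :
    (G = {g | ∃ u ∈ U, ∃ b ∈ B, g = u * b}) ∧ U ∩ B = {1} ∧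
      ∀ k ∈ G, ∃! p : M × M, p.1 ∈ U ∧ p.2 ∈ B ∧ k = p.1 * p.2 := by
  refine ⟨Set.Subset.antisymm hex ?_, hUB, fun k hk => ?_⟩
  · rintro _ ⟨u, hu, b, hb, rfl⟩
    exact hG u (hUG hu) b (hBG hb)
  obtain ⟨u, hu, b, hb, rfl⟩ := hex k hk
  refine ⟨(u, b), ⟨hu, hb, rfl⟩, ?_⟩
  rintro ⟨u', b'⟩ ⟨hu', hb', heq⟩
  obtain ⟨v, hv, hu'v, hvu'⟩ := hU_inv u' hu'
  obtain ⟨c, hc, hbc⟩ := hB_inv b hb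
  have hvu : v * u = b' * c := by
    rw [← mul_one (v * u), ← hbc, ← mul_assoc, mul_assoc v, heq, ← mul_assoc, hvu', one_mul]
  have hone : v * u = 1 := by
    have : v * u ∈ U ∩ B := ⟨hU_mul v hv u hu, hvu ▸ hB_mul b' hb' c hc⟩
    rwa [hUB] at this
  have hu'u : u' = u := by
    rw [← mul_one u', ← hone, ← mul_assoc, hu'v, one_mul]
  subst hu'u
  have hb'b : b' = b := by
    rw [← one_mul b', ← hone, mul_assoc, ← heq, ← mul_assoc, hone, one_mul]
  rw [hb'b]

section Valuation

variable {F : Type*} [Field F] (o : ValuationSubring F)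

theorem valuation_eq_one_iff_mem_inv_mem {z : F} :
    o.valuation z = 1 ↔ z ∈ o ∧ z⁻¹ ∈ o ∧ z ≠ 0 := by
  simp only [← ValuationSubring.valuation_le_one_iff, map_inv₀]
  constructor
  · intro h
    exact ⟨h.le, by simp [h], fun h0 => by simp [h0] at h⟩
  · rintro ⟨h1, h2, h0⟩
    exact le_antisymm h1 ((inv_le_one₀ ((Valuation.pos_iff _).2 h0)).1 h2)

theorem valuation_lt_one_of_norm_lt_one {a0 a1 : F} (ha0 : a0 ∈ o)
    (ha1 : a1 ∈ o) (hP : ∀ z ∈ o, o.valuation (z ^ 2 - a1 * z - a0) = 1) {x y : F}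
    (hx : x ∈ o) (hy : y ∈ o) (h : o.valuation (x ^ 2 + a1 * x * y - a0 * y ^ 2) < 1) :
    o.valuation x < 1 ∧ o.valuation y < 1 := by
  have hy1 : o.valuation y < 1 := by
    refine ((o.valuation_le_one_iff y).2 hy).lt_of_ne fun hy1 => h.ne ?_
    have hy0 : y ≠ 0 := fun h0 => by simp [h0] at hy1
    have hz : -x / y ∈ o := by
      rw [← o.valuation_le_one_iff, map_div₀, Valuation.map_neg, hy1, div_one]
      exact (o.valuation_le_one_iff x).2 hx
    have hnorm : x ^ 2 + a1 * x * y - a0 * y ^ 2 =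
        y ^ 2 * ((-x / y) ^ 2 - a1 * (-x / y) - a0) := by
      field_simp
      ring
    rw [hnorm, map_mul, map_pow, hy1, hP _ hz, one_pow, one_mul]
  refine ⟨?_, hy1⟩
  have hx2 : o.valuation (x ^ 2) < 1 := by
    have : x ^ 2 = (x ^ 2 + a1 * x * y - a0 * y ^ 2) - y * (a1 * x - a0 * y) := by ring
    rw [this]
    refine Valuation.map_sub_lt _ h ?_
    rw [map_mul]
    exact mul_lt_one_of_lt_of_le hy1 ((o.valuation_le_one_iff _).2
      (sub_mem (mul_mem ha1 hx) (mul_mem ha0 hy)))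
  rw [map_pow] at hx2
  exact (pow_lt_one_iff_of_nonneg zero_le two_ne_zero).1 hx2

variable [IsDiscreteValuationRing o] {ϖ : F} (hϖo : ϖ ∈ o)

theorem valuation_eq_one_of_not_uniformizer_dvd (hϖ : Irreducible (⟨ϖ, hϖo⟩ : o))
    {z : F} (hz : z ∈ o) (h : ¬ ∃ d ∈ o, z = ϖ * d) : o.valuation z = 1 := by
  refine ((o.valuation_le_one_iff z).2 hz).eq_of_not_lt fun hlt => h ?_
  have hmax := (o.valuation_lt_one_iff ⟨z, hz⟩).2 hlt
  rw [hϖ.maximalIdeal_eq, Ideal.mem_span_singleton] at hmax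
  obtain ⟨d, hd⟩ := hmax
  exact ⟨d, d.2, congrArg Subtype.val hd⟩

end Valuation

section GL2

variable {F : Type*} [Field F] {o : ValuationSubring F}

theorem det_mem_of_apply_mem {g : Matrix (Fin 2) (Fin 2) F} (hg : ∀ i j, g i j ∈ o) :
    g.det ∈ o := by
  rw [det_fin_two]
  exact sub_mem (mul_mem (hg 0 0) (hg 1 1)) (mul_mem (hg 0 1) (hg 1 0))

variable (o) in
theorem mem_GLo_iff {g : Matrix (Fin 2) (Fin 2) F} :
    g ∈ GLo o ↔ (∀ i j, g i j ∈ o) ∧ o.valuation g.det = 1 := by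
  constructor
  · rintro ⟨hg, h, hh, hgh, -⟩
    refine ⟨hg, le_antisymm ((o.valuation_le_one_iff _).2 (det_mem_of_apply_mem hg)) ?_⟩
    calc 1 = o.valuation g.det * o.valuation h.det := by
          rw [← map_mul, ← det_mul, hgh, det_one, map_one]
      _ ≤ o.valuation g.det :=
          mul_le_of_le_one_right' ((o.valuation_le_one_iff _).2 (det_mem_of_apply_mem hh))
  · rintro ⟨hg, hdet⟩
    have hunit : IsUnit g.det := isUnit_iff_ne_zero.2 fun h0 => by simp [h0] at hdet
    refine ⟨hg, g⁻¹, fun i j => ?_, mul_nonsing_inv g hunit, nonsing_inv_mul g hunit⟩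
    have hinv : g.det⁻¹ ∈ o := by
      rw [← o.valuation_le_one_iff, map_inv₀, hdet, inv_one]
    rw [inv_def, Ring.inverse_eq_inv', adjugate_fin_two]
    fin_cases i <;> fin_cases j <;> simp [mul_mem hinv, hg]

theorem mul_mem_GLo {g h : Matrix (Fin 2) (Fin 2) F} (hg : g ∈ GLo o) (hh : h ∈ GLo o) :
    g * h ∈ GLo o := by
  rw [mem_GLo_iff] at *
  refine ⟨fun i j => ?_, by rw [det_mul, map_mul, hg.2, hh.2, one_mul]⟩
  rw [mul_apply]
  exact sum_mem fun l _ => mul_mem (hg.1 i l) (hh.1 l j)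

theorem exists_valuation_eq_one_of_mem_GLo {g : Matrix (Fin 2) (Fin 2) F} (hg : g ∈ GLo o)
    (j : Fin 2) : (∃ i, o.valuation (g i j) = 1) ∧ ∃ i, o.valuation (g j i) = 1 := by
  obtain ⟨hent, hdet⟩ := (mem_GLo_iff o).1 hg
  have hle : ∀ i j, o.valuation (g i j) ≤ 1 := fun i j => (o.valuation_le_one_iff _).2 (hent i j)
  -- each of the two terms of `det g` contains one entry of any given column, and of any given row
  constructor <;> by_contra! h <;> refine hdet.not_lt ?_ <;>
    replace h := fun i => (hle _ _).lt_of_ne (h i) <;>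
    rw [det_fin_two] <;> refine Valuation.map_sub_lt _ ?_ ?_ <;> rw [map_mul] <;> fin_cases j <;>
    first
      | exact mul_lt_one_of_lt_of_le (h _) (hle _ _)
      | exact (mul_comm _ _).trans_lt (mul_lt_one_of_lt_of_le (h _) (hle _ _))

end GL2

section Order

variable {F : Type*} [Field F] (o : ValuationSubring F) {a0 a1 : F}

theorem smul_one_add_smul_companion (x y : F) :
    x • (1 : Matrix (Fin 2) (Fin 2) F) + y • !![0, 1; a0, a1] =
      !![x, y; a0 * y, x + a1 * y] := by
  ext i j
  fin_cases i <;> fin_cases j <;> simp [one_fin_two, mul_comm]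

theorem mem_OL_iff {m : Matrix (Fin 2) (Fin 2) F} :
    m ∈ OL o !![0, 1; a0, a1] ↔
      ∃ x y : F, x ∈ o ∧ y ∈ o ∧ m = !![x, y; a0 * y, x + a1 * y] := by
  simp only [OL, smul_one_add_smul_companion, Set.mem_ofPred_eq]

theorem one_mem_OL : (1 : Matrix (Fin 2) (Fin 2) F) ∈ OL o !![0, 1; a0, a1] :=
  ⟨1, 0, one_mem o, zero_mem o, by simp⟩

variable {o}

theorem apply_mem_of_mem_OL (ha0 : a0 ∈ o) (ha1 : a1 ∈ o) {m : Matrix (Fin 2) (Fin 2) F}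
    (hm : m ∈ OL o !![0, 1; a0, a1]) (i j : Fin 2) : m i j ∈ o := by
  obtain ⟨x, y, hx, hy, rfl⟩ := (mem_OL_iff o).1 hm
  fin_cases i <;> fin_cases j <;> simp [hx, hy, mul_mem ha0 hy, add_mem hx (mul_mem ha1 hy)]

theorem mul_mem_OL (ha0 : a0 ∈ o) (ha1 : a1 ∈ o) {m n : Matrix (Fin 2) (Fin 2) F}
    (hm : m ∈ OL o !![0, 1; a0, a1]) (hn : n ∈ OL o !![0, 1; a0, a1]) :
    m * n ∈ OL o !![0, 1; a0, a1] := by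
  obtain ⟨x, y, hx, hy, rfl⟩ := (mem_OL_iff o).1 hm
  obtain ⟨x', y', hx', hy', rfl⟩ := (mem_OL_iff o).1 hn
  refine (mem_OL_iff o).2 ⟨x * x' + a0 * y * y', x * y' + y * x' + a1 * y * y',
    add_mem (mul_mem hx hx') (mul_mem (mul_mem ha0 hy) hy'),
    add_mem (add_mem (mul_mem hx hy') (mul_mem hy hx')) (mul_mem (mul_mem ha1 hy) hy'), ?_⟩
  ext i j
  fin_cases i <;> fin_cases j <;> simp <;> ring

theorem OLx_subset_GLo (ha0 : a0 ∈ o) (ha1 : a1 ∈ o) : OLx o !![0, 1; a0, a1] ⊆ GLo o :=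
  fun _ ⟨hm, m', hm', hmm', hm'm⟩ =>
    ⟨apply_mem_of_mem_OL ha0 ha1 hm, m', apply_mem_of_mem_OL ha0 ha1 hm', hmm', hm'm⟩

theorem mem_OLx_of_valuation_det (ha1 : a1 ∈ o) {m : Matrix (Fin 2) (Fin 2) F}
    (hm : m ∈ OL o !![0, 1; a0, a1]) (hdet : o.valuation m.det = 1) :
    m ∈ OLx o !![0, 1; a0, a1] := by
  have hunit : IsUnit m.det := isUnit_iff_ne_zero.2 fun h0 => by simp [h0] at hdet
  have hinv : m.det⁻¹ ∈ o := by
    rw [← o.valuation_le_one_iff, map_inv₀, hdet, inv_one]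
  refine ⟨hm, m⁻¹, ?_, mul_nonsing_inv m hunit, nonsing_inv_mul m hunit⟩
  obtain ⟨x, y, hx, hy, rfl⟩ := (mem_OL_iff o).1 hm
  -- the inverse is `det⁻¹` times the conjugate `(x + a1 y) - y α`
  refine (mem_OL_iff o).2 ⟨_, _, mul_mem hinv (add_mem hx (mul_mem ha1 hy)),
    mul_mem hinv (neg_mem hy), ?_⟩
  rw [inv_def, Ring.inverse_eq_inv', adjugate_fin_two]
  ext i j
  fin_cases i <;> fin_cases j <;> simp <;> ring

theorem valuation_det_eq_one_of_mem_OL (ha0 : a0 ∈ o) (ha1 : a1 ∈ o)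
    (hP : ∀ z ∈ o, o.valuation (z ^ 2 - a1 * z - a0) = 1)
    {m : Matrix (Fin 2) (Fin 2) F} (hm : m ∈ OL o !![0, 1; a0, a1]) {i j : Fin 2}
    (hij : o.valuation (m i j) = 1) : o.valuation m.det = 1 := by
  have hdet := (o.valuation_le_one_iff _).2 (det_mem_of_apply_mem (apply_mem_of_mem_OL ha0 ha1 hm))
  refine hdet.eq_of_not_lt fun hlt => hij.not_lt ?_
  obtain ⟨x, y, hx, hy, rfl⟩ := (mem_OL_iff o).1 hm
  obtain ⟨hx1, hy1⟩ := valuation_lt_one_of_norm_lt_one o ha0 ha1 hP hx hy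
    (by rw [det_fin_two_of] at hlt; convert hlt using 2; ring)
  have hay : o.valuation (a0 * y) < 1 := by
    rw [map_mul, mul_comm]; exact mul_lt_one_of_lt_of_le hy1 ((o.valuation_le_one_iff _).2 ha0)
  have hxay : o.valuation (x + a1 * y) < 1 := by
    refine Valuation.map_add_lt _ hx1 ?_
    rw [map_mul, mul_comm]; exact mul_lt_one_of_lt_of_le hy1 ((o.valuation_le_one_iff _).2 ha1)
  fin_cases i <;> fin_cases j <;> simpa

end Order

section Lift

variable {F : Type*} [Field F] {o : ValuationSubring F} {a0 a1 : F}

theorem exists_mem_OL_col_eq (ha1 : a1 ∈ o) (ha0u : a0⁻¹ ∈ o) (ha0ne : a0 ≠ 0)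
    {w : Fin 2 → F} (hw : ∀ i, w i ∈ o) (j : Fin 2) :
    ∃ m ∈ OL o !![0, 1; a0, a1], ∀ i, m i j = w i := by
  fin_cases j
  · refine ⟨_, (mem_OL_iff o).2 ⟨w 0, a0⁻¹ * w 1, hw 0, mul_mem ha0u (hw 1), rfl⟩, ?_⟩
    simp [Fin.forall_fin_two, ha0ne]
  · refine ⟨_, (mem_OL_iff o).2 ⟨w 1 - a1 * w 0, w 0, sub_mem (hw 1) (mul_mem ha1 (hw 0)),
      hw 0, rfl⟩, ?_⟩
    simp [Fin.forall_fin_two]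

theorem exists_mem_OL_row_eq (ha1 : a1 ∈ o) (ha0u : a0⁻¹ ∈ o) (ha0ne : a0 ≠ 0)
    {w : Fin 2 → F} (hw : ∀ i, w i ∈ o) (j : Fin 2) :
    ∃ m ∈ OL o !![0, 1; a0, a1], ∀ i, m j i = w i := by
  fin_cases j
  · exact ⟨_, (mem_OL_iff o).2 ⟨w 0, w 1, hw 0, hw 1, rfl⟩, by simp [Fin.forall_fin_two]⟩
  · refine ⟨_, (mem_OL_iff o).2 ⟨w 1 - a1 * (a0⁻¹ * w 0), a0⁻¹ * w 0,
      sub_mem (hw 1) (mul_mem ha1 (mul_mem ha0u (hw 0))), mul_mem ha0u (hw 0), rfl⟩, ?_⟩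
    simp [Fin.forall_fin_two, ha0ne]

theorem eq_one_of_mem_OL (ha0ne : a0 ≠ 0) {m : Matrix (Fin 2) (Fin 2) F}
    (hm : m ∈ OL o !![0, 1; a0, a1]) {j : Fin 2}
    (h : (∀ i, m i j = (1 : Matrix (Fin 2) (Fin 2) F) i j) ∨
      ∀ i, m j i = (1 : Matrix (Fin 2) (Fin 2) F) j i) : m = 1 := by
  obtain ⟨x, y, -, -, rfl⟩ := (mem_OL_iff o).1 hm
  clear hm
  fin_cases j <;> rcases h with h | h <;> simp [Fin.forall_fin_two, ha0ne, one_apply] at h <;>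
    obtain ⟨h₁, h₂⟩ := h <;> simp_all [one_fin_two]

end Lift

section Stabilizer

variable {F : Type*} [Field F] (o : ValuationSubring F)

theorem mul_apply_of_col_eq_one {A b : Matrix (Fin 2) (Fin 2) F} {j : Fin 2}
    (h : ∀ i, b i j = (1 : Matrix (Fin 2) (Fin 2) F) i j) (i : Fin 2) : (A * b) i j = A i j := by
  conv_rhs => rw [← mul_one A]
  simp only [mul_apply, h]

theorem mul_apply_of_row_eq_one {A b : Matrix (Fin 2) (Fin 2) F} {j : Fin 2}
    (h : ∀ i, b j i = (1 : Matrix (Fin 2) (Fin 2) F) j i) (i : Fin 2) : (b * A) j i = A j i := by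
  conv_rhs => rw [← one_mul A]
  simp only [mul_apply, h]

def colStabilizer (j : Fin 2) : Set (Matrix (Fin 2) (Fin 2) F) :=
  {b ∈ GLo o | ∀ i, b i j = (1 : Matrix (Fin 2) (Fin 2) F) i j}

def rowStabilizer (j : Fin 2) : Set (Matrix (Fin 2) (Fin 2) F) :=
  {b ∈ GLo o | ∀ i, b j i = (1 : Matrix (Fin 2) (Fin 2) F) j i}

variable {o} {j : Fin 2} {b c : Matrix (Fin 2) (Fin 2) F}

theorem mul_mem_colStabilizer (hb : b ∈ colStabilizer o j) (hc : c ∈ colStabilizer o j) :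
    b * c ∈ colStabilizer o j :=
  ⟨mul_mem_GLo hb.1 hc.1, fun i => (mul_apply_of_col_eq_one hc.2 i).trans (hb.2 i)⟩

theorem mul_mem_rowStabilizer (hb : b ∈ rowStabilizer o j) (hc : c ∈ rowStabilizer o j) :
    b * c ∈ rowStabilizer o j :=
  ⟨mul_mem_GLo hb.1 hc.1, fun i => (mul_apply_of_row_eq_one hb.2 i).trans (hc.2 i)⟩

theorem exists_mul_eq_one_of_mem_colStabilizer (hb : b ∈ colStabilizer o j) :
    ∃ c ∈ colStabilizer o j, b * c = 1 := by
  obtain ⟨⟨hbo, c, hco, hbc, hcb⟩, hcol⟩ := hb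
  refine ⟨c, ⟨⟨hco, b, hbo, hcb, hbc⟩, fun i => ?_⟩, hbc⟩
  rw [← mul_apply_of_col_eq_one (A := c) hcol, hcb]

theorem exists_mul_eq_one_of_mem_rowStabilizer (hb : b ∈ rowStabilizer o j) :
    ∃ c ∈ rowStabilizer o j, b * c = 1 := by
  obtain ⟨⟨hbo, c, hco, hbc, hcb⟩, hrow⟩ := hb
  refine ⟨c, ⟨⟨hco, b, hbo, hcb, hbc⟩, fun i => ?_⟩, hbc⟩
  rw [← mul_apply_of_row_eq_one (A := c) hrow, hbc]

end Stabilizer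

section Factorization

variable {F : Type*} [Field F] {o : ValuationSubring F} {a0 a1 : F}

theorem one_mem_OLx : (1 : Matrix (Fin 2) (Fin 2) F) ∈ OLx o !![0, 1; a0, a1] :=
  ⟨one_mem_OL o, 1, one_mem_OL o, one_mul 1, one_mul 1⟩

theorem mul_mem_OLx (ha0 : a0 ∈ o) (ha1 : a1 ∈ o) {m n : Matrix (Fin 2) (Fin 2) F}
    (hm : m ∈ OLx o !![0, 1; a0, a1]) (hn : n ∈ OLx o !![0, 1; a0, a1]) :
    m * n ∈ OLx o !![0, 1; a0, a1] := by
  obtain ⟨hm, m', hm', hmm', hm'm⟩ := hm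
  obtain ⟨hn, n', hn', hnn', hn'n⟩ := hn
  refine ⟨mul_mem_OL ha0 ha1 hm hn, n' * m', mul_mem_OL ha0 ha1 hn' hm', ?_, ?_⟩
  · rw [mul_assoc, ← mul_assoc n, hnn', one_mul, hmm']
  · rw [mul_assoc, ← mul_assoc m', hm'm, one_mul, hn'n]

theorem exists_inv_mem_OLx {m : Matrix (Fin 2) (Fin 2) F} (hm : m ∈ OLx o !![0, 1; a0, a1]) :
    ∃ m' ∈ OLx o !![0, 1; a0, a1], m * m' = 1 ∧ m' * m = 1 := by
  obtain ⟨hm, m', hm', hmm', hm'm⟩ := hm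
  exact ⟨m', ⟨hm', m, hm, hm'm, hmm'⟩, hmm', hm'm⟩

theorem mem_OLx_of_valuation_entry (ha0 : a0 ∈ o) (ha1 : a1 ∈ o)
    (hP : ∀ z ∈ o, o.valuation (z ^ 2 - a1 * z - a0) = 1)
    {m : Matrix (Fin 2) (Fin 2) F} (hm : m ∈ OL o !![0, 1; a0, a1]) {i j : Fin 2}
    (hij : o.valuation (m i j) = 1) : m ∈ OLx o !![0, 1; a0, a1] :=
  mem_OLx_of_valuation_det ha1 hm (valuation_det_eq_one_of_mem_OL ha0 ha1 hP hm hij)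

theorem OLx_inter_colStabilizer (ha0 : a0 ∈ o) (ha1 : a1 ∈ o) (ha0ne : a0 ≠ 0) (j : Fin 2) :
    OLx o !![0, 1; a0, a1] ∩ colStabilizer o j = {1} := by
  ext m
  constructor
  · rintro ⟨⟨hm, -⟩, -, hcol⟩
    exact eq_one_of_mem_OL ha0ne hm (.inl hcol)
  · rintro rfl
    exact ⟨one_mem_OLx, OLx_subset_GLo ha0 ha1 one_mem_OLx, fun _ => rfl⟩

theorem OLx_inter_rowStabilizer (ha0 : a0 ∈ o) (ha1 : a1 ∈ o) (ha0ne : a0 ≠ 0) (j : Fin 2) :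
    OLx o !![0, 1; a0, a1] ∩ rowStabilizer o j = {1} := by
  ext m
  constructor
  · rintro ⟨⟨hm, -⟩, -, hrow⟩
    exact eq_one_of_mem_OL ha0ne hm (.inr hrow)
  · rintro rfl
    exact ⟨one_mem_OLx, OLx_subset_GLo ha0 ha1 one_mem_OLx, fun _ => rfl⟩

variable (ha0 : a0 ∈ o) (ha1 : a1 ∈ o) (ha0u : a0⁻¹ ∈ o) (ha0ne : a0 ≠ 0)
  (hP : ∀ z ∈ o, o.valuation (z ^ 2 - a1 * z - a0) = 1)
include ha0 ha1 ha0u ha0ne hP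

theorem exists_mem_OLx_mul_colStabilizer {k : Matrix (Fin 2) (Fin 2) F} (hk : k ∈ GLo o)
    (j : Fin 2) : ∃ u ∈ OLx o !![0, 1; a0, a1], ∃ b ∈ colStabilizer o j, k = u * b := by
  obtain ⟨i, hi⟩ := (exists_valuation_eq_one_of_mem_GLo hk j).1
  obtain ⟨u, hu, hcol⟩ := exists_mem_OL_col_eq ha1 ha0u ha0ne (fun i => hk.1 i j) j
  have hux := mem_OLx_of_valuation_entry ha0 ha1 hP hu (i := i) (j := j) (by rwa [hcol])
  obtain ⟨u', hu', huu', hu'u⟩ := exists_inv_mem_OLx hux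
  refine ⟨u, hux, u' * k, ⟨mul_mem_GLo (OLx_subset_GLo ha0 ha1 hu') hk, fun i => ?_⟩, ?_⟩
  · rw [← hu'u, mul_apply, mul_apply]
    simp only [hcol]
  · rw [← mul_assoc, huu', one_mul]

theorem exists_mem_OLx_mul_rowStabilizer {k : Matrix (Fin 2) (Fin 2) F} (hk : k ∈ GLo o)
    (j : Fin 2) : ∃ u ∈ OLx o !![0, 1; a0, a1], ∃ b ∈ rowStabilizer o j, k = u * b := by
  obtain ⟨h, hho, hkh, hhk⟩ := hk.2
  have hh : h ∈ GLo o := ⟨hho, k, hk.1, hhk, hkh⟩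
  obtain ⟨i, hi⟩ := (exists_valuation_eq_one_of_mem_GLo hh j).2
  obtain ⟨u', hu', hrow⟩ := exists_mem_OL_row_eq ha1 ha0u ha0ne (fun i => hho j i) j
  have hu'x := mem_OLx_of_valuation_entry ha0 ha1 hP hu' (i := j) (j := i) (by rwa [hrow])
  obtain ⟨u, hu, hu'u, huu'⟩ := exists_inv_mem_OLx hu'x
  refine ⟨u, hu, u' * k, ⟨mul_mem_GLo (OLx_subset_GLo ha0 ha1 hu'x) hk, fun i => ?_⟩, ?_⟩
  · rw [← hhk, mul_apply, mul_apply]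
    simp only [hrow]
  · rw [← mul_assoc, huu', one_mul]

end Factorization

section Mirabolic

variable {F : Type*} [Field F] (o : ValuationSubring F)

theorem mem_GLo_iff_of_det_eq {m : Matrix (Fin 2) (Fin 2) F} {z : F} (hdet : m.det = z) :
    m ∈ GLo o ↔ (∀ i j, m i j ∈ o) ∧ z ∈ o ∧ z⁻¹ ∈ o ∧ z ≠ 0 := by
  rw [mem_GLo_iff, hdet, valuation_eq_one_iff_mem_inv_mem]

theorem setOf_eq_rowStabilizer_one :
    {m | ∃ z z' : F, z ∈ o ∧ z⁻¹ ∈ o ∧ z ≠ 0 ∧ z' ∈ o ∧ m = !![z, z'; 0, 1]} =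
      rowStabilizer o 1 := by
  ext m
  constructor
  · rintro ⟨z, z', hz, hzi, hz0, hz', rfl⟩
    exact ⟨(mem_GLo_iff_of_det_eq o (by simp [det_fin_two])).2
      ⟨by simp [Fin.forall_fin_two, hz, hz'], hz, hzi, hz0⟩, by simp [Fin.forall_fin_two]⟩
  · rintro ⟨hm, hrow⟩
    simp [Fin.forall_fin_two, one_apply] at hrow
    have hdet : m.det = m 0 0 := by simp [det_fin_two, hrow]
    obtain ⟨hent, hz, hzi, hz0⟩ := (mem_GLo_iff_of_det_eq o hdet).1 hm
    exact ⟨m 0 0, m 0 1, hz, hzi, hz0, hent 0 1, by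
      ext i j; fin_cases i <;> fin_cases j <;> simp [hrow]⟩

theorem setOf_eq_colStabilizer_zero :
    {m | ∃ z z' : F, z ∈ o ∧ z⁻¹ ∈ o ∧ z ≠ 0 ∧ z' ∈ o ∧ m = !![1, z'; 0, z]} =
      colStabilizer o 0 := by
  ext m
  constructor
  · rintro ⟨z, z', hz, hzi, hz0, hz', rfl⟩
    exact ⟨(mem_GLo_iff_of_det_eq o (by simp [det_fin_two])).2
      ⟨by simp [Fin.forall_fin_two, hz, hz'], hz, hzi, hz0⟩, by simp [Fin.forall_fin_two]⟩
  · rintro ⟨hm, hcol⟩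
    simp [Fin.forall_fin_two, one_apply] at hcol
    have hdet : m.det = m 1 1 := by simp [det_fin_two, hcol]
    obtain ⟨hent, hz, hzi, hz0⟩ := (mem_GLo_iff_of_det_eq o hdet).1 hm
    exact ⟨m 1 1, m 0 1, hz, hzi, hz0, hent 0 1, by
      ext i j; fin_cases i <;> fin_cases j <;> simp [hcol]⟩

theorem setOf_eq_colStabilizer_one :
    {m | ∃ z z' : F, z ∈ o ∧ z⁻¹ ∈ o ∧ z ≠ 0 ∧ z' ∈ o ∧ m = !![z, 0; z', 1]} =
      colStabilizer o 1 := by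
  ext m
  constructor
  · rintro ⟨z, z', hz, hzi, hz0, hz', rfl⟩
    exact ⟨(mem_GLo_iff_of_det_eq o (by simp [det_fin_two])).2
      ⟨by simp [Fin.forall_fin_two, hz, hz'], hz, hzi, hz0⟩, by simp [Fin.forall_fin_two]⟩
  · rintro ⟨hm, hcol⟩
    simp [Fin.forall_fin_two, one_apply] at hcol
    have hdet : m.det = m 0 0 := by simp [det_fin_two, hcol]
    obtain ⟨hent, hz, hzi, hz0⟩ := (mem_GLo_iff_of_det_eq o hdet).1 hm
    exact ⟨m 0 0, m 1 0, hz, hzi, hz0, hent 1 0, by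
      ext i j; fin_cases i <;> fin_cases j <;> simp [hcol]⟩

theorem setOf_eq_rowStabilizer_zero :
    {m | ∃ z z' : F, z ∈ o ∧ z⁻¹ ∈ o ∧ z ≠ 0 ∧ z' ∈ o ∧ m = !![1, 0; z', z]} =
      rowStabilizer o 0 := by
  ext m
  constructor
  · rintro ⟨z, z', hz, hzi, hz0, hz', rfl⟩
    exact ⟨(mem_GLo_iff_of_det_eq o (by simp [det_fin_two])).2
      ⟨by simp [Fin.forall_fin_two, hz, hz'], hz, hzi, hz0⟩, by simp [Fin.forall_fin_two]⟩
  · rintro ⟨hm, hrow⟩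
    simp [Fin.forall_fin_two, one_apply] at hrow
    have hdet : m.det = m 1 1 := by simp [det_fin_two, hrow]
    obtain ⟨hent, hz, hzi, hz0⟩ := (mem_GLo_iff_of_det_eq o hdet).1 hm
    exact ⟨m 1 1, m 1 0, hz, hzi, hz0, hent 1 0, by
      ext i j; fin_cases i <;> fin_cases j <;> simp [hrow]⟩

end Mirabolic

theorem factorization_of_stabilizer {F : Type*} [Field F] {o : ValuationSubring F} {a0 a1 : F}
    (ha0 : a0 ∈ o) (ha1 : a1 ∈ o) (ha0u : a0⁻¹ ∈ o) (ha0ne : a0 ≠ 0)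
    (hP : ∀ z ∈ o, o.valuation (z ^ 2 - a1 * z - a0) = 1) {B : Set (Matrix (Fin 2) (Fin 2) F)}
    (hB : ∃ j, B = colStabilizer o j ∨ B = rowStabilizer o j) :
    (GLo o = {g | ∃ u ∈ OLx o !![0, 1; a0, a1], ∃ bm ∈ B, g = u * bm}) ∧
      (OLx o !![0, 1; a0, a1] ∩ B = {1}) ∧
      (∀ k ∈ GLo o,
        ∃! p : Matrix (Fin 2) (Fin 2) F × Matrix (Fin 2) (Fin 2) F,
          p.1 ∈ OLx o !![0, 1; a0, a1] ∧ p.2 ∈ B ∧ k = p.1 * p.2) := by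
  obtain ⟨j, rfl | rfl⟩ := hB
  · exact factorization_of_inter_eq_one (fun _ hg _ hh => mul_mem_GLo hg hh)
      (OLx_subset_GLo ha0 ha1) (fun _ hb => hb.1) (fun _ hm _ hn => mul_mem_OLx ha0 ha1 hm hn)
      (fun _ => exists_inv_mem_OLx) (fun _ hb _ hc => mul_mem_colStabilizer hb hc)
      (fun _ => exists_mul_eq_one_of_mem_colStabilizer) (OLx_inter_colStabilizer ha0 ha1 ha0ne j)
      (fun _ hk => exists_mem_OLx_mul_colStabilizer ha0 ha1 ha0u ha0ne hP hk j)
  · exact factorization_of_inter_eq_one (fun _ hg _ hh => mul_mem_GLo hg hh)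
      (OLx_subset_GLo ha0 ha1) (fun _ hb => hb.1) (fun _ hm _ hn => mul_mem_OLx ha0 ha1 hm hn)
      (fun _ => exists_inv_mem_OLx) (fun _ hb _ hc => mul_mem_rowStabilizer hb hc)
      (fun _ => exists_mul_eq_one_of_mem_rowStabilizer) (OLx_inter_rowStabilizer ha0 ha1 ha0ne j)
      (fun _ hk => exists_mem_OLx_mul_rowStabilizer ha0 ha1 ha0u ha0ne hP hk j)

/-- With the four mirabolic subgroups
`B₁(𝔬), B₂(𝔬), B₃(𝔬), B₄(𝔬)` of `GL₂(𝔬)`, one has, for each `i`: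
`GL₂(𝔬) = 𝒪_L^× · B_i(𝔬)`, `𝒪_L^× ∩ B_i(𝔬) = {1}`, and every `k ∈ GL₂(𝔬)` factors
uniquely as `k = u·b` with `u ∈ 𝒪_L^×`, `b ∈ B_i(𝔬)`. -/
theorem stmt_11 {F : Type*} [Field F]
    (o : ValuationSubring F) [IsDiscreteValuationRing o]
    (ϖ : F) (hϖo : ϖ ∈ o) (hϖ : Irreducible (⟨ϖ, hϖo⟩ : o))
    (a0 a1 : F) (ha0 : a0 ∈ o) (ha1 : a1 ∈ o) (ha0u : a0⁻¹ ∈ o) (ha0ne : a0 ≠ 0)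
    (hirr : ∀ z : F, z ∈ o → ¬ ∃ d ∈ o, z ^ 2 - a1 * z - a0 = ϖ * d) :
    ∀ B ∈ ({ {m | ∃ z z' : F, z ∈ o ∧ z⁻¹ ∈ o ∧ z ≠ 0 ∧ z' ∈ o ∧ m = !![z, z'; 0, 1]},
              {m | ∃ z z' : F, z ∈ o ∧ z⁻¹ ∈ o ∧ z ≠ 0 ∧ z' ∈ o ∧ m = !![1, z'; 0, z]},
              {m | ∃ z z' : F, z ∈ o ∧ z⁻¹ ∈ o ∧ z ≠ 0 ∧ z' ∈ o ∧ m = !![z, 0; z', 1]},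
              {m | ∃ z z' : F, z ∈ o ∧ z⁻¹ ∈ o ∧ z ≠ 0 ∧ z' ∈ o ∧ m = !![1, 0; z', z]} }
            : Set (Set (Matrix (Fin 2) (Fin 2) F))),
      (GLo o = {g | ∃ u ∈ OLx o !![0, 1; a0, a1], ∃ bm ∈ B, g = u * bm}) ∧
      (OLx o !![0, 1; a0, a1] ∩ B = {1}) ∧
      (∀ k ∈ GLo o,
        ∃! p : Matrix (Fin 2) (Fin 2) F × Matrix (Fin 2) (Fin 2) F,
          p.1 ∈ OLx o !![0, 1; a0, a1] ∧ p.2 ∈ B ∧ k = p.1 * p.2) := by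
  have hP : ∀ z ∈ o, o.valuation (z ^ 2 - a1 * z - a0) = 1 := fun z hz =>
    valuation_eq_one_of_not_uniformizer_dvd o hϖo hϖ
      (sub_mem (sub_mem (pow_mem hz 2) (mul_mem ha1 hz)) ha0) (hirr z hz)
  intro B hB
  refine factorization_of_stabilizer ha0 ha1 ha0u ha0ne hP ?_
  simp only [Set.mem_insert_iff, Set.mem_singleton_iff] at hB
  rcases hB with rfl | rfl | rfl | rfl
  exacts [⟨1, .inr (setOf_eq_rowStabilizer_one o)⟩, ⟨0, .inl (setOf_eq_colStabilizer_zero o)⟩,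
    ⟨1, .inl (setOf_eq_colStabilizer_one o)⟩, ⟨0, .inr (setOf_eq_rowStabilizer_zero o)⟩]
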